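/- arXiv:1606.03295 — 2 statements merged into one kernel-verified Lean document; each statement's English description precedes it below -/
import Mathlib

section
/- Let F ∈ ℝ^{m×m} be a symmetric positive definite matrix and let B_1, …, B_m ∈ ℝ^{q×q} be invertible matrices. Then the block matrix V ∈ ℝ^{qm×qm} whose (i,j)-th q×q block equals F_{ij} · B_iᵀ B_j is symmetric positive definite; that is, zᵀVz > 0 for every nonzero z ∈ ℝ^{qm}. -/
open Matrix
open scoped Kronecker

/-!
Let `D` be the block-diagonal matrix with diagonal blocks `B₁, …, Bₘ`. Then `V = Dᵀ (F ⊗ I_q) D`.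
The Kronecker product of the positive definite matrices `F` and `I_q` is positive definite, and
congruence by the invertible matrix `D` preserves positive definiteness.
-/

namespace Matrix

variable {ι κ ν μ R : Type*} [DecidableEq ι]

/-- `blockDiagonal B` with the block index moved to the first coordinate, so that rows and
columns are indexed by `(i, k)` as in `F ⊗ₖ 1`. -/
def blockDiagonalSwap [Zero R] (B : ι → Matrix κ ν R) : Matrix (ι × κ) (ι × ν) R :=
  reindex (Equiv.prodComm κ ι) (Equiv.prodComm ν ι) (blockDiagonal B)

@[simp]
theorem blockDiagonalSwap_apply [Zero R] (B : ι → Matrix κ ν R) (ik : ι × κ) (jl : ι × ν) :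
    blockDiagonalSwap B ik jl = if ik.1 = jl.1 then B ik.1 ik.2 jl.2 else 0 := by
  simp [blockDiagonalSwap, blockDiagonal_apply]

variable [Fintype ι] [Fintype κ] [DecidableEq κ]

theorem isUnit_blockDiagonalSwap [CommRing R] {B : ι → Matrix κ κ R}
    (hB : ∀ i, IsUnit (B i)) : IsUnit (blockDiagonalSwap B) := by
  simp_rw [isUnit_iff_isUnit_det] at hB ⊢
  rw [blockDiagonalSwap, det_reindex_self, det_blockDiagonal]
  exact IsUnit.prod_univ_iff.2 hB

theorem transpose_blockDiagonalSwap_mul_kronecker_one_mul [CommSemiring R]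
    (F : Matrix ι ι R) (B : ι → Matrix κ ν R) (C : ι → Matrix κ μ R) :
    (blockDiagonalSwap B)ᵀ * (F ⊗ₖ (1 : Matrix κ κ R)) * blockDiagonalSwap C =
      of fun (ik : ι × ν) (jl : ι × μ) => F ik.1 jl.1 * ((B ik.1)ᵀ * C jl.1) ik.2 jl.2 := by
  ext ⟨i, k⟩ ⟨j, l⟩
  simp [mul_apply, Fintype.sum_prod_type, one_apply, Finset.mul_sum]
  exact Finset.sum_congr rfl fun _ _ => by ring

end Matrix

/-- If `F ∈ ℝ^{m×m}` is symmetric positive definite and `B_1, …, B_m ∈ ℝ^{q×q}` are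
invertible, then the block matrix `V` with `(i,j)`-th `q×q` block `F i j • (B i)ᵀ * (B j)`
is symmetric positive definite. -/
theorem blockMatrix_posDef {m q : ℕ} (F : Matrix (Fin m) (Fin m) ℝ) (hF : F.PosDef)
    (B : Fin m → Matrix (Fin q) (Fin q) ℝ) (hB : ∀ i, IsUnit (B i))
    (V : Matrix (Fin m × Fin q) (Fin m × Fin q) ℝ)
    (hV : ∀ ik jl : Fin m × Fin q, V ik jl = F ik.1 jl.1 * ((B ik.1)ᵀ * B jl.1) ik.2 jl.2) :
    V.PosDef := by
  have hV_eq : V = (blockDiagonalSwap B)ᴴ * (F ⊗ₖ 1) * blockDiagonalSwap B := by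
    rw [conjTranspose_eq_transpose_of_trivial, transpose_blockDiagonalSwap_mul_kronecker_one_mul]
    exact ext hV
  rw [hV_eq]
  exact (hF.kronecker .one).conjTranspose_mul_mul_same
    (mulVec_injective_of_isUnit (isUnit_blockDiagonalSwap hB))
end

section
/- Let T be a set, let f : T × T → ℝ be a positive definite kernel, and let B : T → ℝ^{q×q} be a map such that B_t is invertible for every t ∈ T. Then K : T × T → ℝ^{q×q} defined by K(s,t) = f(s,t) · B_sᵀ B_t is a positive definite matrix-valued kernel. -/
open Matrix

/-- `f : T × T → ℝ` is a positive definite kernel if for every injective finite family of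
points the associated Gram matrix is symmetric positive definite. -/
def IsPosDefKernel {T : Type*} (f : T → T → ℝ) : Prop :=
  ∀ (m : ℕ) (s : Fin m → T), Function.Injective s →
    (Matrix.of fun i j => f (s i) (s j)).PosDef

/-- `K : T × T → ℝ^{q×q}` is a positive definite matrix-valued kernel if for every
injective finite family of points the associated block Gram matrix has positive quadratic
form on nonzero vectors. -/
def IsPosDefMatrixKernel {T : Type*} {q : ℕ} (K : T → T → Matrix (Fin q) (Fin q) ℝ) : Prop :=
  ∀ (m : ℕ) (s : Fin m → T), Function.Injective s →
    ∀ z : Fin m × Fin q → ℝ, z ≠ 0 →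
      0 < z ⬝ᵥ ((Matrix.of fun ik jl : Fin m × Fin q => K (s ik.1) (s jl.1) ik.2 jl.2) *ᵥ z)

open scoped Kronecker ComplexOrder

/- With `D` the block-diagonal matrix of the `B i`, the block matrix is `Dᴴ (A ⊗ₖ 1) D`: a
positive definite matrix conjugated by an invertible one. -/
theorem Matrix.PosDef.comp_smul_conjTranspose_mul {ι κ 𝕜 : Type*} [Fintype ι] [Fintype κ]
    [DecidableEq ι] [DecidableEq κ] [RCLike 𝕜] {A : Matrix ι ι 𝕜} (hA : A.PosDef)
    {B : ι → Matrix κ κ 𝕜} (hB : ∀ i, IsUnit (B i)) :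
    (comp ι ι κ κ 𝕜 (of fun i j => A i j • ((B i)ᴴ * B j))).PosDef := by
  set D := comp ι ι κ κ 𝕜 (diagonal B)
  have hD : IsUnit D := (isUnit_comp_iff ..).2 ((Pi.isUnit_iff.2 hB).map (diagonalRingHom ι _))
  have hconj : comp ι ι κ κ 𝕜 (of fun i j => A i j • ((B i)ᴴ * B j)) = Dᴴ * (A ⊗ₖ 1) * D := by
    ext ⟨i, k⟩ ⟨j, l⟩
    simp only [D, comp_apply, of_apply, smul_apply, mul_apply, conjTranspose_apply,
      RCLike.star_def, smul_eq_mul, Finset.mul_sum, diagonal_apply, Matrix.ite_apply, zero_apply,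
      apply_ite (starRingEnd 𝕜), map_zero, kroneckerMap_apply, one_apply, mul_ite, mul_one,
      mul_zero, ite_mul, zero_mul, Fintype.sum_prod_type, Finset.sum_ite_eq', Finset.mem_univ,
      ↓reduceIte, Finset.sum_ite_irrel, Finset.sum_const_zero]
    exact Finset.sum_congr rfl fun _ _ => by ring
  rw [hconj]
  exact (hA.kronecker PosDef.one).conjTranspose_mul_mul_same (mulVec_injective_iff_isUnit.2 hD)

/-- If `f` is a positive definite kernel on `T` and `B_t` is invertible for every `t ∈ T`,
then `K(s,t) = f s t • (B_s)ᵀ * B_t` is a positive definite matrix-valued kernel. -/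
theorem posDefMatrixKernel_of_invertible {T : Type*} {q : ℕ}
    (f : T → T → ℝ) (hf : IsPosDefKernel f)
    (B : T → Matrix (Fin q) (Fin q) ℝ) (hB : ∀ s, IsUnit (B s)) :
    IsPosDefMatrixKernel (fun s t => f s t • ((B s)ᵀ * B t)) := by
  intro m s hs z hz
  -- over `ℝ`, `star` and `ᴴ` are definitionally trivial and `comp` unfolds to the block matrix
  exact ((hf m s hs).comp_smul_conjTranspose_mul fun i => hB (s i)).dotProduct_mulVec_pos hz
end
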